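/- Let r ≠ s and q ≠ t be indices in {1,...,n} and 0 ≤ k, ℓ ≤ n−2. Then: (i) ⟨V_k(r,s), W_ℓ'⟩ = 0 for all 0 ≤ ℓ' ≤ n; (ii) ⟨V_k(r,s), V_ℓ(q,t)⟩ = 0 whenever k ≠ ℓ; (iii) ⟨V_k(r,s), V_k(r,s)⟩ = 2·C(n−2,k); (iv) if r, s, t are pairwise distinct then ⟨V_k(r,s), V_k(r,t)⟩ = C(n−2,k); in particular, for s ≠ t, ⟨V_k(r,s), V_k(r,s)⟩ = 2·⟨V_k(r,s), V_k(r,t)⟩. -/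

import Mathlib

open scoped BigOperators

noncomputable section

/-- The state space `ℂ^{2^n}`: complex coefficient functions on binary `n`-tuples,
with the standard orthonormal basis given by the `ket`s of the tuples. -/
abbrev QVec (n : ℕ) := (Fin n → Bool) → ℂ

/-- Flip bit `r` of a binary tuple, i.e. `v ↦ v + e_r` (addition mod 2). -/
def bflip {n : ℕ} (r : Fin n) (v : Fin n → Bool) : Fin n → Bool :=
  Function.update v r (!(v r))

/-- Pauli `X_r`: on basis kets, `X_r |v⟩ = |v + e_r⟩`. -/
def PX {n : ℕ} (r : Fin n) (ψ : QVec n) : QVec n := fun v => ψ (bflip r v)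

/-- Pauli `Z_r`: on basis kets, `Z_r |v⟩ = (-1)^{v_r} |v⟩`. -/
def PZ {n : ℕ} (r : Fin n) (ψ : QVec n) : QVec n :=
  fun v => (if v r then (-1 : ℂ) else 1) * ψ v

/-- Pauli `Y_r`: on basis kets, `Y_r |v⟩ = i (-1)^{v_r} |v + e_r⟩`. -/
def PY {n : ℕ} (r : Fin n) (ψ : QVec n) : QVec n :=
  fun v => Complex.I * (if v r then (1 : ℂ) else -1) * ψ (bflip r v)

/-- The inner product on `ℂ^{2^n}`, conjugate-linear in the first argument. -/
def qinner {n : ℕ} (ψ φ : QVec n) : ℂ :=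
  ∑ v : Fin n → Bool, (starRingEnd ℂ) (ψ v) * φ v

/-- Hamming weight of a binary tuple. -/
def wt {n : ℕ} (v : Fin n → Bool) : ℕ := (Finset.univ.filter (fun i => v i = true)).card

/-- Basis ket `|v⟩`. -/
def ket {n : ℕ} (v : Fin n → Bool) : QVec n := fun w => if w = v then 1 else 0

/-- `W_k = Σ_{wt(v) = k} |v⟩`. -/
def Wvec (n : ℕ) (k : ℕ) : QVec n := fun v => if wt v = k then 1 else 0

/-- The Pauli operators indexed by `Fin 3`: `0 ↦ X`, `1 ↦ Y`, `2 ↦ Z`. -/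
def pauli {n : ℕ} (t : Fin 3) (r : Fin n) : QVec n → QVec n :=
  if t = 0 then PX r else if t = 1 then PY r else PZ r

/-- The Knill–Laflamme error-correction condition: the code `(c 0, c 1)` corrects
the (indexed) error set `E` iff `⟨e_p c_i, e_q c_j⟩ = δ_{ij} d_{pq}` for some matrix `d`. -/
def Corrects {n : ℕ} {ι : Type} (E : ι → (QVec n → QVec n)) (c : Fin 2 → QVec n) : Prop :=
  ∃ d : ι → ι → ℂ, ∀ p q : ι, ∀ i j : Fin 2,
    qinner (E p (c i)) (E q (c j)) = if i = j then d p q else 0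

/-- `V_k(r,s) = Σ_{wt(v) = k, v_r = v_s = 0} (|v + e_r⟩ - |v + e_s⟩)`. -/
def Vk {n : ℕ} (r s : Fin n) (k : ℕ) : QVec n :=
  ∑ v ∈ Finset.univ.filter
      (fun v : Fin n → Bool => wt v = k ∧ v r = false ∧ v s = false),
    (ket (bflip r v) - ket (bflip s v))

lemma bflip_self {n} (r : Fin n) (v) : bflip r v r = !(v r) := by simp [bflip]

lemma bflip_ne {n} {r i : Fin n} (h : i ≠ r) (v) : bflip r v i = v i := by
  simp [bflip, Function.update_of_ne h]

lemma bflip_bflip {n} (r : Fin n) (v) : bflip r (bflip r v) = v := by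
  funext i
  by_cases h : i = r
  · subst h; simp [bflip]
  · rw [bflip_ne h, bflip_ne h]

lemma wt_update {n} (v : Fin n → Bool) (r : Fin n) (b : Bool) :
    wt (Function.update v r b) + (if v r then 1 else 0) = wt v + (if b then 1 else 0) := by
  unfold wt
  rw [Finset.card_filter, Finset.card_filter]
  rw [Fintype.sum_eq_add_sum_compl r, Fintype.sum_eq_add_sum_compl r (fun i => if v i = true then 1 else 0)]
  have : ∀ i ∈ ({r}ᶜ : Finset (Fin n)),
      (if Function.update v r b i = true then 1 else 0) = (if v i = true then 1 else 0) := by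
    intro i hi
    rw [Function.update_of_ne (by simpa using hi)]
  rw [Finset.sum_congr rfl this]
  simp only [Function.update_self]
  cases b <;> cases hv : v r <;> simp [hv] <;> omega

lemma wt_bflip_of_false {n} {v : Fin n → Bool} {r : Fin n} (h : v r = false) :
    wt (bflip r v) = wt v + 1 := by
  have := wt_update v r (!(v r))
  rw [h] at this
  simpa [bflip, h] using this

lemma wt_bflip_of_true {n} {v : Fin n → Bool} {r : Fin n} (h : v r = true) :
    wt (bflip r v) + 1 = wt v := by
  have := wt_update v r (!(v r))
  rw [h] at this
  simpa [bflip, h] using this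

lemma qinner_sum_left {n} {ι} (S : Finset ι) (f : ι → QVec n) (φ : QVec n) :
    qinner (∑ v ∈ S, f v) φ = ∑ v ∈ S, qinner (f v) φ := by
  simp only [qinner, Finset.sum_apply, map_sum, Finset.sum_mul]
  exact Finset.sum_comm

lemma qinner_ket_sub_left {n} (a b : Fin n → Bool) (φ : QVec n) :
    qinner (ket a - ket b) φ = φ a - φ b := by
  simp [qinner, ket, apply_ite (starRingEnd ℂ), sub_mul, Finset.sum_sub_distrib,
    Finset.sum_ite_eq', ite_mul]

lemma qinner_Vk_left {n} (r s : Fin n) (k : ℕ) (φ : QVec n) :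
    qinner (Vk r s k) φ =
      ∑ v ∈ Finset.univ.filter
          (fun v : Fin n → Bool => wt v = k ∧ v r = false ∧ v s = false),
        (φ (bflip r v) - φ (bflip s v)) := by
  rw [Vk, qinner_sum_left]
  exact Finset.sum_congr rfl fun v _ => qinner_ket_sub_left _ _ _

lemma Vk_apply {n} (q t : Fin n) (hqt : q ≠ t) (l : ℕ) (w : Fin n → Bool) :
    Vk q t l w = (if w q = true ∧ w t = false ∧ wt w = l + 1 then 1 else 0)
               - (if w q = false ∧ w t = true ∧ wt w = l + 1 then 1 else 0) := by
  rw [Vk, Finset.sum_apply]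
  simp only [Pi.sub_apply, ket]
  rw [Finset.sum_sub_distrib]
  have key : ∀ c : Fin n, ∀ v : Fin n → Bool,
      (w = bflip c v) ↔ (v = bflip c w) := by
    intro c v
    constructor
    · rintro rfl; rw [bflip_bflip]
    · rintro rfl; rw [bflip_bflip]
  have step : ∀ c d e : Fin n, c ≠ d → (e = c ∨ e = d) →
      (∑ v ∈ Finset.univ.filter
          (fun v : Fin n → Bool => wt v = l ∧ v c = false ∧ v d = false),
        (if w = bflip e v then (1:ℂ) else 0))
      = (if (wt (bflip e w) = l ∧ bflip e w c = false ∧ bflip e w d = false) then 1 else 0) := by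
    intro c d e hcd he
    have h1 : ∀ v : Fin n → Bool, (if w = bflip e v then (1:ℂ) else 0)
        = (if v = bflip e w then (1:ℂ) else 0) := fun v => if_congr (key e v) rfl rfl
    rw [Finset.sum_congr rfl fun v _ => h1 v, Finset.sum_ite_eq']
    simp [Finset.mem_filter]
  rw [step q t q hqt (Or.inl rfl), step q t t hqt (Or.inr rfl)]
  have e1 : (wt (bflip q w) = l ∧ bflip q w q = false ∧ bflip q w t = false)
      ↔ (w q = true ∧ w t = false ∧ wt w = l + 1) := by
    rw [bflip_self, bflip_ne (Ne.symm hqt)]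
    cases hwq : w q with
    | false => simp
    | true =>
      have h := wt_bflip_of_true (v := w) (r := q) hwq
      constructor
      · rintro ⟨h1, -, h3⟩; refine ⟨by trivial, h3, by omega⟩
      · rintro ⟨-, h2, h3⟩; refine ⟨by omega, by trivial, h2⟩
  have e2 : (wt (bflip t w) = l ∧ bflip t w q = false ∧ bflip t w t = false)
      ↔ (w q = false ∧ w t = true ∧ wt w = l + 1) := by
    rw [bflip_self, bflip_ne hqt]
    cases hwt : w t with
    | false => simp
    | true =>
      have h := wt_bflip_of_true (v := w) (r := t) hwt
      constructor
      · rintro ⟨h1, h2, -⟩; refine ⟨h2, by trivial, by omega⟩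
      · rintro ⟨h2, -, h3⟩; refine ⟨by omega, h2, by trivial⟩
  rw [if_congr e1 rfl rfl, if_congr e2 rfl rfl]

lemma card_S {n} (r s : Fin n) (hrs : r ≠ s) (k : ℕ) :
    (Finset.univ.filter
        (fun v : Fin n → Bool => wt v = k ∧ v r = false ∧ v s = false)).card
      = (n - 2).choose k := by
  have hA : ({r, s}ᶜ : Finset (Fin n)).card = n - 2 := by
    rw [Finset.card_compl]
    rw [Finset.card_insert_of_notMem (by simpa using hrs), Finset.card_singleton]
    simp
  rw [← hA, ← Finset.card_powersetCard]
  refine Finset.card_nbij' (fun v => Finset.univ.filter (fun i => v i = true))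
    (fun T => (fun i => decide (i ∈ T))) ?_ ?_ ?_ ?_
  · intro v hv
    simp only [Finset.mem_coe, Finset.mem_filter, Finset.mem_univ, true_and] at hv
    rw [Finset.mem_coe, Finset.mem_powersetCard]
    refine ⟨?_, hv.1⟩
    intro i hi
    simp only [Finset.mem_filter, Finset.mem_univ, true_and] at hi
    simp only [Finset.mem_compl, Finset.mem_insert, Finset.mem_singleton]
    rintro (rfl | rfl)
    · rw [hv.2.1] at hi; exact Bool.false_ne_true hi
    · rw [hv.2.2] at hi; exact Bool.false_ne_true hi
  · intro T hT
    rw [Finset.mem_coe, Finset.mem_powersetCard] at hT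
    simp only [Finset.mem_coe, Finset.mem_filter, Finset.mem_univ, true_and]
    refine ⟨?_, ?_, ?_⟩
    · rw [← hT.2]
      unfold wt
      congr 1
      ext i
      simp
    · simp only [decide_eq_false_iff_not]
      intro hr
      have := hT.1 hr
      simp at this
    · simp only [decide_eq_false_iff_not]
      intro hs
      have := hT.1 hs
      simp at this
  · intro v hv
    funext i
    by_cases h : v i = true <;> simp [h]
  · intro T hT
    ext i
    simp


/-- Inner product relations for the vectors `V_k(r,s)`:
orthogonality to the `W_ℓ`, orthogonality for distinct `k`,
`⟨V_k(r,s), V_k(r,s)⟩ = 2 C(n-2,k)`, and `⟨V_k(r,s), V_k(r,t)⟩ = C(n-2,k)`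
for `r, s, t` pairwise distinct (so `⟨V_k(r,s), V_k(r,s)⟩ = 2 ⟨V_k(r,s), V_k(r,t)⟩`). -/
theorem stmt11 (n : ℕ) (r s q t : Fin n) (k l : ℕ) (hrs : r ≠ s) (hqt : q ≠ t)
    (hk : k ≤ n - 2) (hl : l ≤ n - 2) :
    (∀ l' : ℕ, l' ≤ n → qinner (Vk r s k) (Wvec n l') = 0)
    ∧ (k ≠ l → qinner (Vk r s k) (Vk q t l) = 0)
    ∧ (qinner (Vk r s k) (Vk r s k) = 2 * ((n - 2).choose k : ℂ))
    ∧ (∀ u : Fin n, u ≠ r → u ≠ s →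
        qinner (Vk r s k) (Vk r u k) = ((n - 2).choose k : ℂ)
        ∧ qinner (Vk r s k) (Vk r s k) = 2 * qinner (Vk r s k) (Vk r u k)) := by
  have hdiag : qinner (Vk r s k) (Vk r s k) = 2 * ((n - 2).choose k : ℂ) := by
    rw [qinner_Vk_left]
    have key : ∀ v ∈ Finset.univ.filter
        (fun v : Fin n → Bool => wt v = k ∧ v r = false ∧ v s = false),
        (Vk r s k (bflip r v) - Vk r s k (bflip s v)) = 2 := by
      intro v hv
      simp only [Finset.mem_filter, Finset.mem_univ, true_and] at hv
      obtain ⟨h1, h2, h3⟩ := hv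
      rw [Vk_apply r s hrs, Vk_apply r s hrs]
      simp only [bflip_self, bflip_ne hrs, bflip_ne (Ne.symm hrs),
        wt_bflip_of_false h2, wt_bflip_of_false h3, h1, h2, h3]
      norm_num
    rw [Finset.sum_congr rfl key, Finset.sum_const, card_S r s hrs k, nsmul_eq_mul]
    push_cast
    ring
  refine ⟨?_, ?_, hdiag, ?_⟩
  · intro l' _
    rw [qinner_Vk_left]
    apply Finset.sum_eq_zero
    intro v hv
    simp only [Finset.mem_filter, Finset.mem_univ, true_and] at hv
    obtain ⟨h1, h2, h3⟩ := hv
    simp only [Wvec]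
    rw [wt_bflip_of_false h2, wt_bflip_of_false h3, h1, sub_self]
  · intro hkl
    rw [qinner_Vk_left]
    apply Finset.sum_eq_zero
    intro v hv
    simp only [Finset.mem_filter, Finset.mem_univ, true_and] at hv
    obtain ⟨h1, h2, h3⟩ := hv
    rw [Vk_apply q t hqt, Vk_apply q t hqt,
      wt_bflip_of_false h2, wt_bflip_of_false h3, h1]
    have hne : k + 1 ≠ l + 1 := by omega
    simp [hne, hkl]
  · intro u hur hus
    have hru : r ≠ u := Ne.symm hur
    have hcross : qinner (Vk r s k) (Vk r u k) = ((n - 2).choose k : ℂ) := by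
      rw [qinner_Vk_left]
      have key : ∀ v ∈ Finset.univ.filter
          (fun v : Fin n → Bool => wt v = k ∧ v r = false ∧ v s = false),
          (Vk r u k (bflip r v) - Vk r u k (bflip s v)) = 1 := by
        intro v hv
        simp only [Finset.mem_filter, Finset.mem_univ, true_and] at hv
        obtain ⟨h1, h2, h3⟩ := hv
        rw [Vk_apply r u hru, Vk_apply r u hru]
        simp only [bflip_self, bflip_ne hur, bflip_ne hrs, bflip_ne hus,
          wt_bflip_of_false h2, wt_bflip_of_false h3, h1, h2, h3]
        cases hvu : v u <;> simp [hvu] <;> norm_num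
      rw [Finset.sum_congr rfl key, Finset.sum_const, card_S r s hrs k, nsmul_eq_mul]
      push_cast
      ring
    exact ⟨hcross, by rw [hdiag, hcross]⟩
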